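/- For any convex regularizer R with Bregman divergence D_R on a convex set K, any vector a, and any c ∈ K, the mirror descent update w* = argmin_{w∈K}{⟨a, w⟩ + D_R(w, c)} satisfies ⟨w* - d, a⟩ ≤ D_R(d, c) - D_R(d, w*) - D_R(w*, c) for every d ∈ K. -/

import Mathlib

/-!
Since `w*` minimizes the differentiable function `⟨a, ·⟩ + D_R(·, c)` on the convex set `K`, its
derivative `⟨a + ∇R(w*) - ∇R(c), ·⟩` is nonnegative in every direction `d - w*` with `d ∈ K`.
The three-point identity `D_R(d,c) - D_R(d,w*) - D_R(w*,c) = ⟨∇R(w*) - ∇R(c), d - w*⟩`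
turns this into the claim.
-/

open InnerProductSpace

theorem IsMinOn.hasFDerivAt_apply_sub_nonneg {E : Type*} [NormedAddCommGroup E] [NormedSpace ℝ E]
    {f : E → ℝ} {f' : StrongDual ℝ E} {K : Set E} {x y : E} (hK : Convex ℝ K) (hx : x ∈ K)
    (hy : y ∈ K) (hmin : IsMinOn f K x) (hf : HasFDerivAt f f' x) : 0 ≤ f' (y - x) :=
  hmin.localize.hasFDerivWithinAt_nonneg hf.hasFDerivWithinAt
    (sub_mem_posTangentConeAt_of_segment_subset (hK.segment_subset hx hy))

section Bregman

variable {E : Type*} [NormedAddCommGroup E] [InnerProductSpace ℝ E]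

def bregmanDiv (R : E → ℝ) (g : E → E) (x y : E) : ℝ := R x - R y - ⟪g y, x - y⟫_ℝ

variable {R : E → ℝ} {g : E → E}

theorem bregmanDiv_three_point (c w d : E) :
    bregmanDiv R g d c - bregmanDiv R g d w - bregmanDiv R g w c = ⟪g w - g c, d - w⟫_ℝ := by
  have hsplit : d - c = (d - w) + (w - c) := by abel
  simp only [bregmanDiv, hsplit, inner_add_right, inner_sub_left]
  ring

theorem hasFDerivAt_bregmanDiv_left [CompleteSpace E] {x : E} (hR : HasGradientAt R (g x) x)
    (c : E) :
    HasFDerivAt (fun w => bregmanDiv R g w c) (innerSL ℝ (g x - g c)) x := by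
  have hfun :
      (fun w => bregmanDiv R g w c) = fun w => R w - ⟪g c, w⟫_ℝ - (R c - ⟪g c, c⟫_ℝ) := by
    funext w
    simp only [bregmanDiv, inner_sub_right]
    ring
  have hderiv : innerSL ℝ (g x - g c) = toDual ℝ E (g x) - innerSL ℝ (g c) := by
    ext v
    simp
  rw [hfun, hderiv]
  exact ((hasGradientAt_iff_hasFDerivAt.mp hR).sub (innerSL ℝ (g c)).hasFDerivAt).sub_const _

end Bregman

theorem mirror_descent_three_point_general
    {E : Type*} [NormedAddCommGroup E] [InnerProductSpace ℝ E] [CompleteSpace E]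
    (K : Set E) (hK : Convex ℝ K)
    (R : E → ℝ) (gR : E → E)
    (hgR : ∀ x, HasGradientAt R (gR x) x)   -- gR is the gradient of R
    (D : E → E → ℝ)
    (hD : ∀ x y, D x y = R x - R y - (inner ℝ (gR y) (x - y) : ℝ))  -- Bregman divergence
    (a : E) (c wstar : E) (hw : wstar ∈ K)
    -- w* is the minimizer of ⟨a, ·⟩ + D_R(·, c) over K:
    (hmin : ∀ w ∈ K, (inner ℝ a wstar : ℝ) + D wstar c ≤ (inner ℝ a w : ℝ) + D w c) :
    ∀ d ∈ K, (inner ℝ (wstar - d) a : ℝ) ≤ D d c - D d wstar - D wstar c := by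
  intro d hd
  obtain rfl : D = bregmanDiv R gR := funext₂ hD
  have hisMin : IsMinOn (fun w => ⟪a, w⟫_ℝ + bregmanDiv R gR w c) K wstar := hmin
  have hopt := hisMin.hasFDerivAt_apply_sub_nonneg hK hw hd
    ((innerSL ℝ a).hasFDerivAt.add (hasFDerivAt_bregmanDiv_left (hgR wstar) c))
  rw [bregmanDiv_three_point, ← neg_sub d wstar, inner_neg_left, real_inner_comm]
  simp only [add_apply, innerSL_apply_apply] at hopt
  linarith

/-- Beck–Teboulle three-point property: the mirror descent update
`w* = argmin_{w∈K} { ⟨a, w⟩ + D_R(w, c) }` satisfies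
`⟨w* - d, a⟩ ≤ D_R(d,c) - D_R(d,w*) - D_R(w*,c)` for every `d ∈ K`. -/
theorem mirror_descent_three_point
    {E : Type*} [NormedAddCommGroup E] [InnerProductSpace ℝ E] [CompleteSpace E]
    (K : Set E) (hK : Convex ℝ K)
    (R : E → ℝ) (gR : E → E)
    (hR_conv : ConvexOn ℝ K R)
    (hgR : ∀ x, HasGradientAt R (gR x) x)   -- gR is the gradient of R
    (D : E → E → ℝ)
    (hD : ∀ x y, D x y = R x - R y - (inner ℝ (gR y) (x - y) : ℝ))  -- Bregman divergence
    (a : E) (c wstar : E) (hc : c ∈ K) (hw : wstar ∈ K)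
    -- w* is the minimizer of ⟨a, ·⟩ + D_R(·, c) over K:
    (hmin : ∀ w ∈ K, (inner ℝ a wstar : ℝ) + D wstar c ≤ (inner ℝ a w : ℝ) + D w c) :
    ∀ d ∈ K, (inner ℝ (wstar - d) a : ℝ) ≤ D d c - D d wstar - D wstar c :=
  mirror_descent_three_point_general K hK R gR hgR D hD a c wstar hw hmin
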